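/- arXiv:2012.04590 — 5 statements merged into one kernel-verified Lean document; each statement's English description precedes it below -/
import Mathlib

section
/- Let Δ⁺ and Δ⁻ be convex subsets of ℝⁿ with Δ⁺ ⊆ Δ⁻, and let C be a connected component of the set-theoretic difference Δ⁻ \ Δ⁺ (with its subspace topology). Then the union C ∪ Δ⁺ is a convex set. -/
/-!
Let `C` be the component and `y` a point of a segment `[a, b]` with endpoints in `C ∪ Δ⁺` but
`y ∉ Δ⁺`. As `Δ⁺` is convex and misses `y`, it cannot meet both `[a, y]` and `[y, b]`; say it
misses `[a, y]`. Then `a ∈ C`, and `[a, y]` is a connected subset of `Δ⁻ \ Δ⁺` through `a`,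
so `y ∈ C`.
-/

open Set Convex

theorem Convex.disjoint_segment_left_or_right {𝕜 E : Type*} [Field 𝕜] [LinearOrder 𝕜]
    [IsStrictOrderedRing 𝕜] [AddCommGroup E] [Module 𝕜 E] {s : Set E} (hs : Convex 𝕜 s)
    {a b y : E} (hy : y ∈ [a -[𝕜] b]) (hys : y ∉ s) :
    Disjoint [a -[𝕜] y] s ∨ Disjoint [y -[𝕜] b] s := by
  by_contra! h
  obtain ⟨p, hpa, hps⟩ := not_disjoint_iff.1 h.1
  obtain ⟨q, hqb, hqs⟩ := not_disjoint_iff.1 h.2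
  rw [mem_segment_iff_wbtw] at hy hpa hqb
  exact hys (hs.segment_subset hps hqs ((hy.trans_left_right hpa).trans_right_left hqb).mem_segment)

section TopologicalVectorSpace

variable {E : Type*} [TopologicalSpace E] [AddCommGroup E] [Module ℝ E]
  [IsTopologicalAddGroup E] [ContinuousSMul ℝ E]

theorem mem_connectedComponentIn_of_segment_subset {F : Set E} {a y : E}
    (h : [a -[ℝ] y] ⊆ F) : y ∈ connectedComponentIn F a :=
  (convex_segment a y).isPreconnected.subset_connectedComponentIn (left_mem_segment ℝ a y) h
    (right_mem_segment ℝ a y)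

theorem mem_connectedComponentIn_diff_of_segment_subset {s t : Set E} {x a y : E}
    (ha : a ∈ connectedComponentIn (s \ t) x ∪ t) (h : [a -[ℝ] y] ⊆ s \ t) :
    y ∈ connectedComponentIn (s \ t) x := by
  have haC : a ∈ connectedComponentIn (s \ t) x :=
    ha.resolve_right (h (left_mem_segment ℝ a y)).2
  rw [connectedComponentIn_eq haC]
  exact mem_connectedComponentIn_of_segment_subset h

theorem Convex.connectedComponentIn_diff_union {Δp Δm : Set E} (hΔp : Convex ℝ Δp)
    (hΔm : Convex ℝ Δm) (hsub : Δp ⊆ Δm) (x : E) :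
    Convex ℝ (connectedComponentIn (Δm \ Δp) x ∪ Δp) := by
  have hΔm' : connectedComponentIn (Δm \ Δp) x ∪ Δp ⊆ Δm :=
    union_subset (fun z hz ↦ (connectedComponentIn_subset _ _ hz).1) hsub
  refine convex_iff_segment_subset.2 fun a ha b hb y hy ↦ ?_
  by_cases hyΔp : y ∈ Δp
  · exact Or.inr hyΔp
  have hab : [a -[ℝ] b] ⊆ Δm := hΔm.segment_subset (hΔm' ha) (hΔm' hb)
  refine Or.inl ((hΔp.disjoint_segment_left_or_right hy hyΔp).elim (fun h ↦ ?_) fun h ↦ ?_)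
  · refine mem_connectedComponentIn_diff_of_segment_subset ha (subset_sdiff.2 ⟨?_, h⟩)
    exact ((convex_segment a b).segment_subset (left_mem_segment ℝ a b) hy).trans hab
  · rw [segment_symm] at h
    refine mem_connectedComponentIn_diff_of_segment_subset hb (subset_sdiff.2 ⟨?_, h⟩)
    exact ((convex_segment a b).segment_subset (right_mem_segment ℝ a b) hy).trans hab

end TopologicalVectorSpace

theorem union_component_convex_general {n : ℕ} (Δp Δm : Set (Fin n → ℝ))
    (hΔp : Convex ℝ Δp) (hΔm : Convex ℝ Δm) (hsub : Δp ⊆ Δm)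
    (x : Fin n → ℝ) :
    Convex ℝ (connectedComponentIn (Δm \ Δp) x ∪ Δp) :=
  hΔp.connectedComponentIn_diff_union hΔm hsub x

/-- Let `Δp` and `Δm` be convex subsets of `ℝⁿ` with `Δp ⊆ Δm`, and let `C` be the connected
component of the set-theoretic difference `Δm \ Δp` (with its subspace topology) containing
a point `x`.  Then the union `C ∪ Δp` is a convex set.
(Convexity assertion of Proposition 13 of the paper.) -/
theorem union_component_convex {n : ℕ} (Δp Δm : Set (Fin n → ℝ))
    (hΔp : Convex ℝ Δp) (hΔm : Convex ℝ Δm) (hsub : Δp ⊆ Δm)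
    (x : Fin n → ℝ) (hx : x ∈ Δm \ Δp) :
    Convex ℝ (connectedComponentIn (Δm \ Δp) x ∪ Δp) :=
  union_component_convex_general Δp Δm hΔp hΔm hsub x
end

section
/- Let Δ⁺ ⊆ Δ⁻ ⊆ ℝⁿ, where Δ⁻ is convex and Δ⁺ is closed and convex, and let C be a connected component of Δ⁻ \ Δ⁺. Then every extreme point of C ∪ Δ⁺ is an extreme point of Δ⁺ or an extreme point of Δ⁻; that is, extremePoints(C ∪ Δ⁺) ⊆ extremePoints(Δ⁺) ∪ extremePoints(Δ⁻). -/
/-!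
Let `y` be an extreme point of `C ∪ Δp`. If `y ∈ Δp` it is extreme in the smaller set `Δp`.
Otherwise `y ∈ C`, and since `Δp` is closed some ball `B` around `y` misses `Δp`; the convex,
hence connected, set `Δm ∩ B` contains `y` and lies in `Δm \ Δp`, so it lies in `C`, and `y` is
extreme in `Δm ∩ B`. Being an extreme point of a convex set is a local property: a segment of
`Δm` through `y`, shrunk towards `y` by a homothety, becomes a segment of `Δm ∩ B` through `y`.
So `y` is extreme in `Δm`.
-/

open Set Filter Topology AffineMap

theorem Convex.mem_extremePoints_of_mem_extremePoints_inter_nhds {E : Type*} [AddCommGroup E]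
    [Module ℝ E] [TopologicalSpace E] [IsTopologicalAddGroup E] [ContinuousSMul ℝ E] {K s : Set E}
    {y : E} (hK : Convex ℝ K) (hs : s ∈ 𝓝 y) (hy : y ∈ (K ∩ s).extremePoints ℝ) :
    y ∈ K.extremePoints ℝ := by
  refine mem_extremePoints_iff_left.2 ⟨hy.1.1, fun a ha b hb hab => ?_⟩
  have hnear : ∀ z, ∀ᶠ t in 𝓝[>] (0 : ℝ), lineMap y z t ∈ s := fun z =>
    nhdsWithin_le_nhds <| lineMap_continuous.tendsto' 0 y (lineMap_apply_zero y z) hs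
  obtain ⟨t, ⟨has, hbs⟩, ht0, ht1⟩ :=
    ((hnear a).and (hnear b)).and (Ioc_mem_nhdsGT one_pos) |>.exists
  have hshrunk : y ∈ openSegment ℝ (lineMap y a t) (lineMap y b t) := by
    rw [← homothety_eq_lineMap, ← homothety_eq_lineMap, ← image_openSegment]
    exact ⟨y, hab, homothety_apply_same y t⟩
  have hya : lineMap y a t = y :=
    (mem_extremePoints_iff_left.1 hy).2 _ ⟨hK.lineMap_mem hy.1.1 ha ⟨ht0.le, ht1⟩, has⟩
      _ ⟨hK.lineMap_mem hy.1.1 hb ⟨ht0.le, ht1⟩, hbs⟩ hshrunk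
  rw [lineMap_eq_left_iff] at hya
  exact (hya.resolve_right ht0.ne').symm

theorem Convex.mem_extremePoints_of_mem_extremePoints_connectedComponentIn_diff {E : Type*}
    [SeminormedAddCommGroup E] [NormedSpace ℝ E] {K F : Set E} {x y : E} (hK : Convex ℝ K)
    (hF : IsClosed F) (hy : y ∈ (connectedComponentIn (K \ F) x).extremePoints ℝ) :
    y ∈ K.extremePoints ℝ := by
  have hyC := hy.1
  have hyKF : y ∈ K \ F := connectedComponentIn_subset _ _ hyC
  obtain ⟨r, hr, hball⟩ := Metric.mem_nhds_iff.1 (hF.isOpen_compl.mem_nhds hyKF.2)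
  have hyKB : y ∈ K ∩ Metric.ball y r := ⟨hyKF.1, Metric.mem_ball_self hr⟩
  have hKB : K ∩ Metric.ball y r ⊆ connectedComponentIn (K \ F) x := by
    rw [connectedComponentIn_eq hyC]
    exact (hK.inter (convex_ball y r)).isPreconnected.subset_connectedComponentIn hyKB
      fun z hz => ⟨hz.1, hball hz.2⟩
  exact hK.mem_extremePoints_of_mem_extremePoints_inter_nhds (Metric.ball_mem_nhds y hr)
    (inter_extremePoints_subset_extremePoints_of_subset hKB ⟨hyKB, hy⟩)

theorem extremePoints_union_component_subset_general {n : ℕ} (Δp Δm : Set (Fin n → ℝ))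
    (hΔpClosed : IsClosed Δp) (hΔm : Convex ℝ Δm)
    (x : Fin n → ℝ) :
    Set.extremePoints ℝ (connectedComponentIn (Δm \ Δp) x ∪ Δp) ⊆
      Set.extremePoints ℝ Δp ∪ Set.extremePoints ℝ Δm := by
  rintro y hy
  rcases hy.1 with hyC | hyP
  · exact Or.inr <| hΔm.mem_extremePoints_of_mem_extremePoints_connectedComponentIn_diff hΔpClosed
      (inter_extremePoints_subset_extremePoints_of_subset subset_union_left ⟨hyC, hy⟩)
  · exact Or.inl <| inter_extremePoints_subset_extremePoints_of_subset subset_union_right ⟨hyP, hy⟩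

/-- Let `Δp ⊆ Δm ⊆ ℝⁿ`, where `Δm` is convex and `Δp` is closed and convex, and let `C` be the
connected component of `Δm \ Δp` containing a point `x`.  Then every extreme point of
`C ∪ Δp` is an extreme point of `Δp` or an extreme point of `Δm`.
(Claim in the proof of Proposition 13 of the paper.) -/
theorem extremePoints_union_component_subset {n : ℕ} (Δp Δm : Set (Fin n → ℝ))
    (hΔpClosed : IsClosed Δp) (hΔp : Convex ℝ Δp) (hΔm : Convex ℝ Δm) (hsub : Δp ⊆ Δm)
    (x : Fin n → ℝ) (hx : x ∈ Δm \ Δp) :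
    Set.extremePoints ℝ (connectedComponentIn (Δm \ Δp) x ∪ Δp) ⊆
      Set.extremePoints ℝ Δp ∪ Set.extremePoints ℝ Δm :=
  extremePoints_union_component_subset_general Δp Δm hΔpClosed hΔm x
end

section
/- Let C₀ ⊆ ℝⁿ be the convex cone generated with nonnegative real coefficients by a finite subset of ℤⁿ, let S⁺, S⁻ ⊆ ℤⁿ be finite nonempty sets, and set Δ⁺ := convexHull ℝ S⁺ + C₀ and Δ⁻ := convexHull ℝ S⁻ + C₀ (Minkowski sums). Assume Δ⁺ ⊆ Δ⁻. Then for every connected component C of Δ⁻ \ Δ⁺ there exists a finite set S ⊆ ℤⁿ such that C ∪ Δ⁺ = convexHull ℝ S + C₀. In other words, the union of Δ⁺ with any connected component of Δ⁻ \ Δ⁺ is again a lattice polyhedron with tail cone C₀. -/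
open Pointwise

/-- The canonical inclusion of the standard lattice `ℤⁿ` into `ℝⁿ`. -/
def intVec {n : ℕ} (v : Fin n → ℤ) : Fin n → ℝ := fun i => (v i : ℝ)

/-- The convex cone generated with nonnegative real coefficients by the finite set
`G` of lattice points of `ℤⁿ`. -/
def latticeCone {n : ℕ} (G : Finset (Fin n → ℤ)) : Set (Fin n → ℝ) :=
  {x | ∃ c : (Fin n → ℤ) → ℝ, (∀ g, 0 ≤ c g) ∧ x = ∑ g ∈ G, c g • intVec g}

/-!
Let `K` be the tail cone and `C` a component of `Δ⁻ \ Δ⁺`. Then `C ∪ Δ⁺` is convex, closed and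
stable under adding `K`: a segment `[y, y + c]` with `c ∈ K` can leave `C` only by entering `Δ⁺`.
Every point of `C` is `p + c` with `p ∈ conv S⁻ ∩ C`, and by Krein–Milman the compact convex set
`conv S⁻ ∩ (C ∪ Δ⁺)` is the closed convex hull of its extreme points. Those lying in `C` are
locally, hence globally, extreme in `conv S⁻`, so they belong to `S⁻`. Thus
`C ∪ Δ⁺ = conv (S⁺ ∪ (S⁻ ∩ C)) + K`. That `K` is closed comes from the conic Carathéodory theorem.
-/

namespace PointedCone

section Caratheodory

variable {𝕜 E : Type*} [Field 𝕜] [LinearOrder 𝕜] [IsStrictOrderedRing 𝕜]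
  [AddCommGroup E] [Module 𝕜 E]

lemma mem_hull_finset {s : Finset E} {x : E} :
    x ∈ hull 𝕜 (s : Set E) ↔ ∃ f : E → 𝕜, (∀ a ∈ s, 0 ≤ f a) ∧ ∑ a ∈ s, f a • a = x := by
  constructor
  · rw [hull, Submodule.mem_span_finset]
    rintro ⟨f, -, rfl⟩
    exact ⟨fun a => f a, fun a _ => (f a).2, rfl⟩
  · rintro ⟨f, hf, rfl⟩
    exact Submodule.sum_mem _ fun a ha => (hull 𝕜 _).smul_mem (hf a ha) (subset_hull ha)

/-- The conic Carathéodory step: a linear dependence among the generators lets one push the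
coefficient of some generator down to zero while keeping all coefficients nonnegative. -/
lemma exists_mem_hull_erase [DecidableEq E] {s : Finset E}
    (hs : ¬LinearIndepOn 𝕜 id (s : Set E)) {x : E} (hx : x ∈ hull 𝕜 (s : Set E)) :
    ∃ y ∈ s, x ∈ hull 𝕜 (s.erase y : Set E) := by
  obtain ⟨f, hf, rfl⟩ := mem_hull_finset.1 hx
  obtain ⟨g, hg, hgpos⟩ : ∃ g : E → 𝕜, ∑ a ∈ s, g a • a = 0 ∧ ∃ a ∈ s, 0 < g a := by
    obtain ⟨g, hg, a, has, hga⟩ : ∃ g : E → 𝕜, ∑ a ∈ s, g a • a = 0 ∧ ∃ a ∈ s, g a ≠ 0 := by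
      simpa using not_linearIndepOn_finset_iff.1 hs
    rcases hga.lt_or_gt with hneg | hpos
    · exact ⟨-g, by simp [neg_smul, hg], a, has, neg_pos.2 hneg⟩
    · exact ⟨g, hg, a, has, hpos⟩
  obtain ⟨y, hy, hmin⟩ := (s.filter (0 < g ·)).exists_min_image (fun a => f a / g a)
    (by obtain ⟨a, ha, hga⟩ := hgpos; exact ⟨a, Finset.mem_filter.2 ⟨ha, hga⟩⟩)
  obtain ⟨hys, hgy⟩ := Finset.mem_filter.1 hy
  set r := f y / g y
  have hr : 0 ≤ r := div_nonneg (hf y hys) hgy.le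
  refine ⟨y, hys, mem_hull_finset.2 ⟨fun a => f a - r * g a, fun a ha => ?_, ?_⟩⟩
  · have has := Finset.mem_of_mem_erase ha
    rw [sub_nonneg]
    rcases le_or_gt (g a) 0 with hga | hga
    · exact (mul_nonpos_of_nonneg_of_nonpos hr hga).trans (hf a has)
    · exact (le_div_iff₀ hga).1 (hmin a (Finset.mem_filter.2 ⟨has, hga⟩))
  · have hy0 : f y - r * g y = 0 := by simp [r, hgy.ne']
    rw [Finset.sum_erase _ (by simp only [hy0, zero_smul])]
    simp only [sub_smul, mul_smul, Finset.sum_sub_distrib, ← Finset.smul_sum, hg, smul_zero,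
      sub_zero]

lemma exists_linearIndepOn_of_mem_hull {s : Finset E} {x : E} (hx : x ∈ hull 𝕜 (s : Set E)) :
    ∃ t ⊆ s, LinearIndepOn 𝕜 id (t : Set E) ∧ x ∈ hull 𝕜 (t : Set E) := by
  classical
  induction s using Finset.strongInduction with
  | H s ih =>
    by_cases hs : LinearIndepOn 𝕜 id (s : Set E)
    · exact ⟨s, subset_rfl, hs, hx⟩
    obtain ⟨y, hys, hxy⟩ := exists_mem_hull_erase hs hx
    obtain ⟨t, hts, ht, hxt⟩ := ih _ (Finset.erase_ssubset hys) hxy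
    exact ⟨t, hts.trans (Finset.erase_subset y s), ht, hxt⟩

end Caratheodory

section Closed

variable {E : Type*} [AddCommGroup E] [Module ℝ E] [TopologicalSpace E] [IsTopologicalAddGroup E]
  [ContinuousSMul ℝ E] [T2Space E]

lemma isClosed_hull_of_linearIndepOn {t : Finset E} (ht : LinearIndepOn ℝ id (t : Set E)) :
    IsClosed (hull ℝ (t : Set E) : Set E) := by
  set L := Fintype.linearCombination ℝ ((↑) : t → E)
  have hL : Topology.IsClosedEmbedding L := LinearMap.isClosedEmbedding_of_injective
    (LinearMap.ker_eq_bot.2 (linearIndependent_iff_injective_fintypeLinearCombination.1 ht))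
  have himage : (hull ℝ (t : Set E) : Set E) = L '' Set.Ici 0 := by
    ext x
    rw [SetLike.mem_coe, hull, Submodule.mem_span_finset']
    constructor
    · rintro ⟨f, rfl⟩
      exact ⟨fun a => f a, fun a => (f a).2, Fintype.linearCombination_apply _ _ _⟩
    · rintro ⟨c, hc, rfl⟩
      exact ⟨fun a => ⟨c a, hc a⟩, (Fintype.linearCombination_apply _ _ _).symm⟩
  rw [himage]
  exact hL.isClosedMap _ isClosed_Ici

lemma isClosed_hull_finset (s : Finset E) : IsClosed (hull ℝ (s : Set E) : Set E) := by
  have hunion : (hull ℝ (s : Set E) : Set E) =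
      ⋃ t ∈ {t : Finset E | t ⊆ s ∧ LinearIndepOn ℝ id (t : Set E)},
        (hull ℝ (t : Set E) : Set E) := by
    ext x
    simp only [Set.mem_iUnion, Set.mem_ofPred_eq, SetLike.mem_coe, exists_prop]
    constructor
    · intro hx
      obtain ⟨t, hts, ht, hxt⟩ := exists_linearIndepOn_of_mem_hull hx
      exact ⟨t, ⟨hts, ht⟩, hxt⟩
    · rintro ⟨t, ⟨hts, -⟩, hxt⟩
      exact Submodule.span_mono (Finset.coe_subset.2 hts) hxt
  rw [hunion]
  exact (s.powerset.finite_toSet.subset fun t ht => Finset.mem_powerset.2 ht.1).isClosed_biUnion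
    fun t ht => isClosed_hull_of_linearIndepOn ht.2

end Closed

end PointedCone

section Components

theorem IsClosed.union_connectedComponentIn_diff {X : Type*} [TopologicalSpace X] {P M : Set X}
    (hM : IsClosed M) (hP : IsClosed P) (x : X) :
    IsClosed (connectedComponentIn (M \ P) x ∪ P) := by
  have hCM : connectedComponentIn (M \ P) x ⊆ M :=
    fun y hy => (connectedComponentIn_subset _ _ hy).1
  rw [← closure_subset_iff_isClosed, closure_union, hP.closure_eq]
  refine Set.union_subset (fun z hz => ?_) Set.subset_union_right
  by_cases hzP : z ∈ P
  · exact Or.inr hzP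
  left
  obtain ⟨y, hy⟩ := closure_nonempty_iff.1 ⟨z, hz⟩
  have hpre := isPreconnected_connectedComponentIn.subset_closure
    (Set.subset_insert z _) (Set.insert_subset hz subset_closure)
  have hzF : z ∈ M \ P := ⟨closure_minimal hCM hM hz, hzP⟩
  rw [connectedComponentIn_eq hy]
  exact hpre.subset_connectedComponentIn (Set.mem_insert_of_mem z hy)
    (Set.insert_subset hzF (connectedComponentIn_subset _ _)) (Set.mem_insert z _)

variable {E : Type*} [AddCommGroup E] [Module ℝ E]

lemma segment_add_subset_diff {K : PointedCone ℝ E} {P M : Set E}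
    (hMK : ∀ y ∈ M, ∀ c ∈ K, y + c ∈ M) (hPK : ∀ y ∈ P, ∀ c ∈ K, y + c ∈ P) {y c : E}
    (hy : y ∈ M) (hc : c ∈ K) (hyc : y + c ∉ P) : segment ℝ y (y + c) ⊆ M \ P := by
  rw [segment_eq_image']
  rintro _ ⟨t, ht, rfl⟩
  rw [add_sub_cancel_left]
  refine ⟨hMK y hy _ (K.smul_mem ht.1 hc), fun h => hyc ?_⟩
  have := hPK _ h _ (K.smul_mem (sub_nonneg.2 ht.2) hc)
  rwa [add_assoc, ← add_smul, add_sub_cancel, one_smul] at this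

variable [TopologicalSpace E] [IsTopologicalAddGroup E] [ContinuousSMul ℝ E]

lemma mem_connectedComponentIn_of_segment_subset_s3 {F : Set E} {x a b : E}
    (hab : segment ℝ a b ⊆ F) (ha : a ∈ connectedComponentIn F x) :
    b ∈ connectedComponentIn F x := by
  rw [connectedComponentIn_eq ha]
  exact (convex_segment a b).isPreconnected.subset_connectedComponentIn (left_mem_segment ℝ a b)
    hab (right_mem_segment ℝ a b)

lemma add_mem_connectedComponentIn_diff_iff {K : PointedCone ℝ E} {P M : Set E}
    (hMK : ∀ y ∈ M, ∀ c ∈ K, y + c ∈ M) (hPK : ∀ y ∈ P, ∀ c ∈ K, y + c ∈ P) {x y c : E}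
    (hy : y ∈ M) (hc : c ∈ K) (hyc : y + c ∉ P) :
    y + c ∈ connectedComponentIn (M \ P) x ↔ y ∈ connectedComponentIn (M \ P) x := by
  have hseg := segment_add_subset_diff hMK hPK hy hc hyc
  exact ⟨mem_connectedComponentIn_of_segment_subset_s3 (segment_symm ℝ y (y + c) ▸ hseg),
    mem_connectedComponentIn_of_segment_subset_s3 hseg⟩

lemma add_mem_union_connectedComponentIn_diff {K : PointedCone ℝ E} {P M : Set E}
    (hMK : ∀ y ∈ M, ∀ c ∈ K, y + c ∈ M) (hPK : ∀ y ∈ P, ∀ c ∈ K, y + c ∈ P) (x : E) :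
    ∀ y ∈ connectedComponentIn (M \ P) x ∪ P, ∀ c ∈ K,
      y + c ∈ connectedComponentIn (M \ P) x ∪ P := by
  rintro y (hyC | hyP) c hc
  · by_cases hycP : y + c ∈ P
    · exact Or.inr hycP
    · exact Or.inl ((add_mem_connectedComponentIn_diff_iff hMK hPK
        (connectedComponentIn_subset _ _ hyC).1 hc hycP).2 hyC)
  · exact Or.inr (hPK y hyP c hc)

/-- The trace of `P` on a segment through a point `w ∉ P` is convex, so it misses one of the two
halves of the segment at `w`; that half connects `w` to an endpoint lying in the component. -/
theorem Convex.union_connectedComponentIn_diff {P M : Set E} (hP : Convex ℝ P)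
    (hM : Convex ℝ M) (hPM : P ⊆ M) (x : E) :
    Convex ℝ (connectedComponentIn (M \ P) x ∪ P) := by
  have hCM : connectedComponentIn (M \ P) x ⊆ M :=
    fun y hy => (connectedComponentIn_subset _ _ hy).1
  rw [convex_iff_segment_subset]
  intro u hu v hv w hw
  by_cases hwP : w ∈ P
  · exact Or.inr hwP
  left
  have huM : u ∈ M := hu.elim (hCM ·) (hPM ·)
  have hvM : v ∈ M := hv.elim (hCM ·) (hPM ·)
  have hwM : w ∈ M := hM.segment_subset huM hvM hw
  have hhalf : Disjoint (segment ℝ u w) P ∨ Disjoint (segment ℝ w v) P := by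
    by_contra! h
    obtain ⟨p, hpu, hpP⟩ := Set.not_disjoint_iff.1 h.1
    obtain ⟨q, hqv, hqP⟩ := Set.not_disjoint_iff.1 h.2
    have hpwq : Wbtw ℝ p w q := ((mem_segment_iff_wbtw.1 hw).trans_left_right
      (mem_segment_iff_wbtw.1 hpu)).trans_right_left (mem_segment_iff_wbtw.1 hqv)
    exact hwP (hP.segment_subset hpP hqP hpwq.mem_segment)
  rcases hhalf with h | h
  · have hseg : segment ℝ u w ⊆ M \ P := fun z hz =>
      ⟨hM.segment_subset huM hwM hz, h.notMem_of_mem_left hz⟩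
    have huC := hu.resolve_right (hseg (left_mem_segment ℝ u w)).2
    exact mem_connectedComponentIn_of_segment_subset_s3 hseg huC
  · have hseg : segment ℝ v w ⊆ M \ P := fun z hz =>
      ⟨hM.segment_subset hvM hwM hz, h.notMem_of_mem_left (segment_symm ℝ v w ▸ hz)⟩
    have hvC := hv.resolve_right (hseg (left_mem_segment ℝ v w)).2
    exact mem_connectedComponentIn_of_segment_subset_s3 hseg hvC

open Filter Topology in
/-- Extremality is a local property: shrinking a segment through `v` towards `v` by a homothety
moves it into any neighbourhood of `v`. -/
theorem Convex.mem_extremePoints_of_mem_nhdsWithin {A B : Set E} {v : E} (hA : Convex ℝ A)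
    (hBA : B ⊆ A) (hB : B ∈ 𝓝[A] v) (hv : v ∈ B.extremePoints ℝ) : v ∈ A.extremePoints ℝ := by
  refine ⟨hBA hv.1, fun a ha b hb hvab => ?_⟩
  have hshrink : ∀ z ∈ A, ∀ᶠ δ in 𝓝[>] (0 : ℝ), AffineMap.homothety v δ z ∈ B := by
    intro z hz
    refine Tendsto.eventually_mem (tendsto_nhdsWithin_iff.2 ⟨?_, ?_⟩) hB
    · have hcont : Continuous fun δ : ℝ => AffineMap.homothety v δ z := by
        simp only [AffineMap.homothety_apply, vsub_eq_sub, vadd_eq_add]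
        fun_prop
      exact (hcont.tendsto' 0 v (by simp)).mono_left nhdsWithin_le_nhds
    · filter_upwards [Ioo_mem_nhdsGT one_pos] with δ hδ
      rw [AffineMap.homothety_eq_lineMap]
      exact hA.lineMap_mem (hBA hv.1) hz ⟨hδ.1.le, hδ.2.le⟩
  obtain ⟨δ, hδa, hδb, hδ⟩ := ((hshrink a ha).and ((hshrink b hb).and self_mem_nhdsWithin)).exists
  have hcancel : ∀ z, AffineMap.homothety v δ z = v → z = v := by
    intro z hz
    rw [AffineMap.homothety_apply, vsub_eq_sub, vadd_eq_add, add_eq_right, smul_eq_zero,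
      sub_eq_zero] at hz
    exact hz.resolve_left (ne_of_gt hδ)
  have hvseg : v ∈ openSegment ℝ (AffineMap.homothety v δ a) (AffineMap.homothety v δ b) := by
    rw [← image_openSegment]
    exact ⟨v, hvab, AffineMap.homothety_apply_same v δ⟩
  exact hcancel a (hv.2 hδa hδb hvseg)

end Components

section Polyhedra

variable {E : Type*} [NormedAddCommGroup E] [NormedSpace ℝ E]

lemma mem_extremePoints_of_mem_connectedComponentIn {A P M : Set E} {x v : E}
    (hA : Convex ℝ A) (hAM : A ⊆ M) (hP : IsClosed P)
    (hv : v ∈ (A ∩ (connectedComponentIn (M \ P) x ∪ P)).extremePoints ℝ)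
    (hvC : v ∈ connectedComponentIn (M \ P) x) : v ∈ A.extremePoints ℝ := by
  obtain ⟨ε, hε, hball⟩ := Metric.mem_nhds_iff.1
    (hP.isOpen_compl.mem_nhds (connectedComponentIn_subset _ _ hvC).2)
  refine hA.mem_extremePoints_of_mem_nhdsWithin Set.inter_subset_left
    (mem_nhdsWithin_iff_exists_mem_nhds_inter.2 ⟨_, Metric.ball_mem_nhds v hε, ?_⟩) hv
  have hballC : A ∩ Metric.ball v ε ⊆ connectedComponentIn (M \ P) x := by
    rw [connectedComponentIn_eq hvC]
    exact (hA.inter (convex_ball v ε)).isPreconnected.subset_connectedComponentIn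
      ⟨hv.1.1, Metric.mem_ball_self hε⟩ fun w hw => ⟨hAM hw.1, hball hw.2⟩
  exact fun z hz => ⟨hz.2, Or.inl (hballC ⟨hz.2, hz.1⟩)⟩

lemma add_mem_add_pointedCone {K : PointedCone ℝ E} {s : Set E} {y c : E} (hy : y ∈ s + K)
    (hc : c ∈ K) : y + c ∈ s + K := by
  obtain ⟨a, ha, k, hk, rfl⟩ := hy
  exact ⟨a, ha, k + c, K.add_mem hk hc, (add_assoc a k c).symm⟩

lemma convexHull_add_pointedCone_subset {K : PointedCone ℝ E} {T X : Set E} (hTX : T ⊆ X)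
    (hX : Convex ℝ X) (hXK : ∀ y ∈ X, ∀ c ∈ K, y + c ∈ X) : convexHull ℝ T + K ⊆ X := by
  rintro _ ⟨a, ha, c, hc, rfl⟩
  exact hXK a (convexHull_min hTX hX ha) c hc

theorem union_connectedComponentIn_diff_eq_convexHull_add {K : PointedCone ℝ E}
    (hK : IsClosed (K : Set E)) {Sp Sm : Set E} (hSp : Sp.Finite) (hSm : Sm.Finite)
    (hsub : convexHull ℝ Sp + (K : Set E) ⊆ convexHull ℝ Sm + (K : Set E)) (x : E) :
    connectedComponentIn ((convexHull ℝ Sm + (K : Set E)) \ (convexHull ℝ Sp + (K : Set E))) x ∪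
        (convexHull ℝ Sp + (K : Set E)) =
      convexHull ℝ (Sp ∪ Sm ∩ connectedComponentIn
          ((convexHull ℝ Sm + (K : Set E)) \ (convexHull ℝ Sp + (K : Set E))) x) + (K : Set E) := by
  set P := convexHull ℝ Sp + (K : Set E)
  set M := convexHull ℝ Sm + (K : Set E)
  set C := connectedComponentIn (M \ P) x
  set Q := convexHull ℝ (Sp ∪ Sm ∩ C) + (K : Set E)
  have hconvex (S : Set E) : Convex ℝ (convexHull ℝ S + (K : Set E)) :=
    (convex_convexHull ℝ S).add K.convex
  have hclosed {S : Set E} (hS : S.Finite) : IsClosed (convexHull ℝ S + (K : Set E)) :=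
    hK.add_left_of_isCompact (hS.isCompact_convexHull ℝ)
  have hhull (S : Set E) : convexHull ℝ S ⊆ convexHull ℝ S + (K : Set E) :=
    Set.subset_add_left _ K.zero_mem
  have hPK : ∀ y ∈ P, ∀ c ∈ K, y + c ∈ P := fun y hy c hc => add_mem_add_pointedCone hy hc
  have hMK : ∀ y ∈ M, ∀ c ∈ K, y + c ∈ M := fun y hy c hc => add_mem_add_pointedCone hy hc
  have hPQ : P ⊆ Q := Set.add_subset_add_right (convexHull_mono Set.subset_union_left)
  have hCP : Convex ℝ (C ∪ P) := (hconvex Sp).union_connectedComponentIn_diff (hconvex Sm) hsub x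
  have hbase : convexHull ℝ Sm ∩ (C ∪ P) ⊆ Q := by
    have hcpt : IsCompact (convexHull ℝ Sm ∩ (C ∪ P)) := (hSm.isCompact_convexHull ℝ).inter_right
      ((hclosed hSm).union_connectedComponentIn_diff (hclosed hSp) x)
    rw [← closure_convexHull_extremePoints hcpt ((convex_convexHull ℝ Sm).inter hCP)]
    refine closure_minimal (convexHull_min ?_ (hconvex _))
      (hclosed (hSp.union (hSm.inter_of_left C)))
    intro v hv
    rcases hv.1.2 with hvC | hvP
    · have hvSm : v ∈ Sm := extremePoints_convexHull_subset
        (mem_extremePoints_of_mem_connectedComponentIn (convex_convexHull ℝ Sm) (hhull Sm)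
          (hclosed hSp) hv hvC)
      exact hhull _ (subset_convexHull ℝ _ (Or.inr ⟨hvSm, hvC⟩))
    · exact hPQ hvP
  have hCQ : C ⊆ Q := by
    intro y hy
    have hyF := connectedComponentIn_subset _ _ hy
    obtain ⟨p, hp, c, hc, rfl⟩ := hyF.1
    have hpC : p ∈ C := (add_mem_connectedComponentIn_diff_iff hMK hPK (hhull Sm hp) hc hyF.2).1 hy
    exact add_mem_add_pointedCone (hbase ⟨hp, Or.inl hpC⟩) hc
  refine (Set.union_subset hCQ hPQ).antisymm (convexHull_add_pointedCone_subset ?_ hCP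
    (add_mem_union_connectedComponentIn_diff hMK hPK x))
  exact Set.union_subset (fun s hs => Or.inr (hhull Sp (subset_convexHull ℝ _ hs)))
    fun s hs => Or.inl hs.2

end Polyhedra

lemma intVec_injective {n : ℕ} : Function.Injective (intVec (n := n)) :=
  fun _ _ h => funext fun i => Int.cast_injective (congrFun h i)

lemma latticeCone_eq_hull {n : ℕ} (G : Finset (Fin n → ℤ)) :
    latticeCone G = (PointedCone.hull ℝ (intVec '' (G : Set (Fin n → ℤ))) : Set (Fin n → ℝ)) := by
  ext x
  rw [← Finset.coe_image, SetLike.mem_coe, PointedCone.mem_hull_finset]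
  constructor
  · rintro ⟨c, hc, rfl⟩
    refine ⟨c ∘ Function.invFun intVec, fun a _ => hc _, ?_⟩
    rw [Finset.sum_image intVec_injective.injOn]
    refine Finset.sum_congr rfl fun g _ => ?_
    rw [Function.comp_apply, Function.leftInverse_invFun intVec_injective g]
  · rintro ⟨f, hf, rfl⟩
    refine ⟨fun g => max (f (intVec g)) 0, fun g => le_max_right _ _, ?_⟩
    rw [Finset.sum_image intVec_injective.injOn]
    exact Finset.sum_congr rfl fun g hg => by
      simp only [max_eq_left (hf _ (Finset.mem_image_of_mem _ hg))]

theorem union_component_is_lattice_polyhedron_general {n : ℕ} (G Sp Sm : Finset (Fin n → ℤ))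
    (Δp Δm : Set (Fin n → ℝ))
    (hΔp : Δp = convexHull ℝ (intVec '' ↑Sp) + latticeCone G)
    (hΔm : Δm = convexHull ℝ (intVec '' ↑Sm) + latticeCone G)
    (hsub : Δp ⊆ Δm)
    (x : Fin n → ℝ) :
    ∃ S : Finset (Fin n → ℤ),
      connectedComponentIn (Δm \ Δp) x ∪ Δp = convexHull ℝ (intVec '' ↑S) + latticeCone G := by
  classical
  have hK : IsClosed
      (PointedCone.hull ℝ (intVec '' (G : Set (Fin n → ℤ))) : Set (Fin n → ℝ)) := by
    rw [← Finset.coe_image]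
    exact PointedCone.isClosed_hull_finset _
  subst hΔp hΔm
  rw [latticeCone_eq_hull] at hsub ⊢
  set C := connectedComponentIn (_ \ _) x
  refine ⟨Sp ∪ Sm.filter (intVec · ∈ C), ?_⟩
  rw [union_connectedComponentIn_diff_eq_convexHull_add hK (Sp.finite_toSet.image _)
    (Sm.finite_toSet.image _) hsub x, Finset.coe_union, Finset.coe_filter, Set.image_union,
    ← Set.image_inter_preimage]
  rfl

/-- Let `C₀ ⊆ ℝⁿ` be the convex cone generated with nonnegative real coefficients by a finite
subset `G` of `ℤⁿ`, let `S⁺, S⁻ ⊆ ℤⁿ` be finite nonempty sets, and set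
`Δ⁺ := convexHull ℝ S⁺ + C₀` and `Δ⁻ := convexHull ℝ S⁻ + C₀` (Minkowski sums).
Assume `Δ⁺ ⊆ Δ⁻`.  Then for every connected component `C` of `Δ⁻ \ Δ⁺` there exists a
finite set `S ⊆ ℤⁿ` with `C ∪ Δ⁺ = convexHull ℝ S + C₀`, i.e. the union of `Δ⁺` with any
connected component of `Δ⁻ \ Δ⁺` is again a lattice polyhedron with tail cone `C₀`.
(General case of Proposition 13 of the paper.) -/
theorem union_component_is_lattice_polyhedron {n : ℕ} (G Sp Sm : Finset (Fin n → ℤ))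
    (hSp : Sp.Nonempty) (hSm : Sm.Nonempty)
    (Δp Δm : Set (Fin n → ℝ))
    (hΔp : Δp = convexHull ℝ (intVec '' ↑Sp) + latticeCone G)
    (hΔm : Δm = convexHull ℝ (intVec '' ↑Sm) + latticeCone G)
    (hsub : Δp ⊆ Δm)
    (x : Fin n → ℝ) (hx : x ∈ Δm \ Δp) :
    ∃ S : Finset (Fin n → ℤ),
      connectedComponentIn (Δm \ Δp) x ∪ Δp = convexHull ℝ (intVec '' ↑S) + latticeCone G :=
  union_component_is_lattice_polyhedron_general G Sp Sm Δp Δm hΔp hΔm hsub x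
end

section
/- Let F be a contravariant functor from subsets of the finite set I to subsets of ℝ such that every value F(I') is a closed convex subset of ℝ (i.e. empty, a closed interval [a,b], a closed half-line, or ℝ), and assume the evaluation subcomplexes C^F_•(m) are exact for every m ∈ ℝ. Define F⁺(I') := F(I') + [0,∞) (Minkowski sum), which is again contravariant. Then the evaluation subcomplexes C^{F⁺}_•(m) are exact for every m ∈ ℝ. -/
open Pointwise

noncomputable section

variable {I : Type*} [Fintype I] [LinearOrder I]

/-- The basis vector `e_J` of the Koszul complex `⋀^• ℂ^I`, indexed by the subset
`J = {i_0 < ⋯ < i_{p-1}} ⊆ I`.  The total space of the Koszul complex is modelled as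
`Finset I → ℂ`, with `⋀^p ℂ^I` the span of the `e_J` with `J.card = p`. -/
def eVec (J : Finset I) : Finset I → ℂ := fun K => if K = J then 1 else 0

/-- The Koszul differential: `d (e_{I'}) = ∑_j (-1)^j e_{I' \ {i_j}}` for
`I' = {i_0 < ⋯ < i_p}`. -/
def koszulD : (Finset I → ℂ) →ₗ[ℂ] (Finset I → ℂ) where
  toFun f := fun J => ∑ i ∈ Jᶜ, (-1 : ℂ) ^ (J.filter (· < i)).card * f (insert i J)
  map_add' f g := by
    funext J
    simp [mul_add, Finset.sum_add_distrib]
  map_smul' c f := by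
    funext J
    simp only [Pi.smul_apply, smul_eq_mul, RingHom.id_apply, Finset.mul_sum]
    exact Finset.sum_congr rfl fun i _ => by ring

/-- The degree-`p` part of the evaluation subcomplex `C^F_•(m)`:
the span of the `e_{I'}` with `#I' = p` and `m ∈ F(I')`. -/
def evalC {α : Type*} (F : Finset I → Set α) (m : α) (p : ℕ) :
    Submodule ℂ (Finset I → ℂ) :=
  Submodule.span ℂ {v | ∃ J : Finset I, J.card = p ∧ m ∈ F J ∧ v = eVec J}

/-- Exactness of the evaluation subcomplex `C^F_•(m)`: its homology vanishes in every
degree `p ≥ 0`. -/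
def evalExact {α : Type*} (F : Finset I → Set α) (m : α) : Prop :=
  ∀ p : ℕ, ∀ x ∈ evalC F m p, koszulD x = 0 →
    ∃ y ∈ evalC F m (p + 1), koszulD y = x


section Aux

variable {I : Type*} [Fintype I] [LinearOrder I]

/-- Span of the basis vectors `e_J` with `J.card = p` and `J ∈ S`. -/
def Cspan (S : Set (Finset I)) (p : ℕ) : Submodule ℂ (Finset I → ℂ) :=
  Submodule.span ℂ {v | ∃ J : Finset I, J.card = p ∧ J ∈ S ∧ v = eVec J}

lemma mem_Cspan_iff {S : Set (Finset I)} {p : ℕ} {x : Finset I → ℂ} :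
    x ∈ Cspan S p ↔ ∀ J, x J ≠ 0 → J.card = p ∧ J ∈ S := by
  classical
  constructor
  · intro hx
    induction hx using Submodule.span_induction with
    | mem v hv =>
      obtain ⟨J, hc, hS, rfl⟩ := hv
      intro K hK
      have hKJ : K = J := by by_contra h; simp [eVec, h] at hK
      subst hKJ; exact ⟨hc, hS⟩
    | zero => intro K hK; simp at hK
    | add a b _ _ ha hb =>
      intro K hK
      by_cases h : a K ≠ 0
      · exact ha K h
      · push_neg at h
        apply hb K
        intro h2
        apply hK
        simp [Pi.add_apply, h, h2]
    | smul c a _ ha =>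
      intro K hK
      apply ha K
      intro h
      apply hK
      simp [Pi.smul_apply, h]
  · intro h
    have hx : x = ∑ J : Finset I, x J • eVec J := by
      funext K
      rw [Finset.sum_apply]
      simp only [Pi.smul_apply, eVec, smul_eq_mul, mul_ite, mul_one, mul_zero]
      rw [Finset.sum_ite_eq Finset.univ K x]
      simp
    rw [hx]
    apply Submodule.sum_mem
    intro J _
    by_cases hJ : x J = 0
    · rw [hJ, zero_smul]; exact zero_mem _
    · exact Submodule.smul_mem _ _
        (Submodule.subset_span ⟨J, (h J hJ).1, (h J hJ).2, rfl⟩)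

lemma Cspan_mono {S T : Set (Finset I)} (h : S ⊆ T) (p : ℕ) : Cspan S p ≤ Cspan T p := by
  intro x hx
  rw [mem_Cspan_iff] at hx ⊢
  exact fun J hJ => ⟨(hx J hJ).1, h (hx J hJ).2⟩

lemma koszulD_apply (f : Finset I → ℂ) (J : Finset I) :
    koszulD f J = ∑ i ∈ Jᶜ, (-1 : ℂ) ^ (J.filter (· < i)).card * f (insert i J) := rfl

lemma koszulD_mem {S : Set (Finset I)}
    (hS : ∀ ⦃J K : Finset I⦄, J ⊆ K → K ∈ S → J ∈ S)
    {p : ℕ} {x : Finset I → ℂ} (hx : x ∈ Cspan S (p + 1)) : koszulD x ∈ Cspan S p := by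
  rw [mem_Cspan_iff] at hx ⊢
  intro J hJ
  rw [koszulD_apply] at hJ
  obtain ⟨i, hi, hne⟩ := Finset.exists_ne_zero_of_sum_ne_zero hJ
  have hxi : x (insert i J) ≠ 0 := by
    intro h; exact hne (by rw [h, mul_zero])
  obtain ⟨hcard, hmem⟩ := hx _ hxi
  have hiJ : i ∉ J := Finset.mem_compl.mp hi
  refine ⟨?_, hS (Finset.subset_insert i J) hmem⟩
  rw [Finset.card_insert_of_notMem hiJ] at hcard
  omega

lemma koszulD_eq_zero_of_mem_zero {S : Set (Finset I)} {x : Finset I → ℂ}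
    (hx : x ∈ Cspan S 0) : koszulD x = 0 := by
  rw [mem_Cspan_iff] at hx
  funext J
  rw [koszulD_apply]
  show _ = (0 : ℂ)
  refine Finset.sum_eq_zero fun i hi => ?_
  have hxz : x (insert i J) = 0 := by
    by_contra h
    have hc := (hx _ h).1
    rw [Finset.card_insert_of_notMem (Finset.mem_compl.mp hi)] at hc
    omega
  rw [hxz, mul_zero]

omit [Fintype I] in
private lemma sign_swap (J : Finset I) {a b : I} (ha : a ∉ J) (hab : a < b) :
    (-1 : ℂ) ^ (J.filter (· < a)).card * (-1 : ℂ) ^ ((insert a J).filter (· < b)).card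
      = -((-1 : ℂ) ^ (J.filter (· < b)).card *
          (-1 : ℂ) ^ ((insert b J).filter (· < a)).card) := by
  have h1 : (insert a J).filter (· < b) = insert a (J.filter (· < b)) := by
    rw [Finset.filter_insert, if_pos hab]
  have h2 : (insert b J).filter (· < a) = J.filter (· < a) := by
    rw [Finset.filter_insert, if_neg (not_lt.mpr hab.le)]
  have h3 : a ∉ J.filter (· < b) := fun h => ha (Finset.mem_of_mem_filter _ h)
  rw [h1, h2, Finset.card_insert_of_notMem h3, pow_succ]
  ring

lemma koszulD_sq (x : Finset I → ℂ) : koszulD (koszulD x) = 0 := by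
  classical
  funext J
  rw [koszulD_apply]
  simp only [koszulD_apply, Finset.mul_sum, Finset.compl_insert, Pi.zero_apply]
  set f : I → I → ℂ := fun i i' =>
    (-1 : ℂ) ^ (J.filter (· < i)).card *
      ((-1 : ℂ) ^ ((insert i J).filter (· < i')).card * x (insert i' (insert i J))) with hf
  show ∑ i ∈ Jᶜ, ∑ i' ∈ Jᶜ.erase i, f i i' = 0
  have key : ∀ i ∈ Jᶜ, ∀ i' ∈ Jᶜ.erase i, f i i' = -f i' i := by
    have main : ∀ a b : I, a ∉ J → b ∉ J → a < b → f a b = -f b a := by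
      intro a b haJ hbJ hab
      have hcomm : insert b (insert a J) = insert a (insert b J) := Finset.insert_comm b a J
      rw [hf]
      simp only []
      rw [hcomm, ← mul_assoc, ← mul_assoc, sign_swap J haJ hab]
      ring
    intro i hi i' hi'
    obtain ⟨hne, hi'c⟩ := Finset.mem_erase.mp hi'
    have hiJ : i ∉ J := Finset.mem_compl.mp hi
    have hi'J : i' ∉ J := Finset.mem_compl.mp hi'c
    rcases hne.lt_or_gt with h | h
    · have := main i' i hi'J hiJ h
      rw [this, neg_neg]
    · exact main i i' hiJ hi'J h
  have hsymm : ∑ i ∈ Jᶜ, ∑ i' ∈ Jᶜ.erase i, f i i'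
      = ∑ i' ∈ Jᶜ, ∑ i ∈ Jᶜ.erase i', f i i' := by
    apply Finset.sum_comm'
    intro i i'
    simp only [Finset.mem_erase]
    constructor
    · rintro ⟨h1, h2, h3⟩; exact ⟨⟨fun h => h2 h.symm, h1⟩, h3⟩
    · rintro ⟨⟨h1, h2⟩, h3⟩; exact ⟨h2, fun h => h1 h.symm, h3⟩
  have hneg : ∑ i ∈ Jᶜ, ∑ i' ∈ Jᶜ.erase i, f i i'
      = -∑ i ∈ Jᶜ, ∑ i' ∈ Jᶜ.erase i, f i' i := by
    rw [← Finset.sum_neg_distrib]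
    refine Finset.sum_congr rfl fun i hi => ?_
    rw [← Finset.sum_neg_distrib]
    exact Finset.sum_congr rfl fun i' hi' => key i hi i' hi'
  have h2 : ∑ i ∈ Jᶜ, ∑ i' ∈ Jᶜ.erase i, f i i'
      = -∑ i ∈ Jᶜ, ∑ i' ∈ Jᶜ.erase i, f i i' := by
    nth_rewrite 2 [hsymm]
    nth_rewrite 1 [hneg]
    rfl
  have := eq_neg_iff_add_eq_zero.mp h2
  exact add_self_eq_zero.mp this

/-- Down-closedness of a family of finsets. -/
def DClosed (S : Set (Finset I)) : Prop := ∀ ⦃J K : Finset I⦄, J ⊆ K → K ∈ S → J ∈ S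

/-- Exactness of the subcomplex spanned by a family. -/
def CExact (S : Set (Finset I)) : Prop :=
  ∀ p : ℕ, ∀ x ∈ Cspan S p, koszulD x = 0 → ∃ y ∈ Cspan S (p + 1), koszulD y = x

lemma cexact_empty : CExact (∅ : Set (Finset I)) := by
  intro p x hx _
  have : x = 0 := by
    funext J
    by_contra h
    exact (mem_Cspan_iff.mp hx J h).2
  refine ⟨0, zero_mem _, ?_⟩
  rw [map_zero, this]

/-- Mayer–Vietoris: exactness of `A`, `B` and `A ∩ B` implies exactness of `A ∪ B`. -/
lemma cexact_union {A B : Set (Finset I)} (hA : DClosed A) (hB : DClosed B)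
    (heA : CExact A) (heB : CExact B) (heI : CExact (A ∩ B)) : CExact (A ∪ B) := by
  classical
  intro p x hx hdx
  set a : Finset I → ℂ := fun J => if J ∈ A then x J else 0 with ha
  have hxmem := mem_Cspan_iff.mp hx
  have haA : a ∈ Cspan A p := by
    rw [mem_Cspan_iff]
    intro J hJ
    rw [ha] at hJ
    by_cases h : J ∈ A
    · exact ⟨(hxmem J (by simpa [h] using hJ)).1, h⟩
    · simp [h] at hJ
  have hbB : x - a ∈ Cspan B p := by
    rw [mem_Cspan_iff]
    intro J hJ
    by_cases h : J ∈ A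
    · exfalso; apply hJ; simp [ha, h]
    · have hxJ : x J ≠ 0 := by simpa [ha, h, Pi.sub_apply] using hJ
      obtain ⟨hc, hm⟩ := hxmem J hxJ
      rcases hm with h' | h'
      · exact absurd h' h
      · exact ⟨hc, h'⟩
  have hdsum : koszulD a + koszulD (x - a) = 0 := by
    rw [← map_add, add_sub_cancel, hdx]
  obtain ⟨z, hz, hdz⟩ : ∃ z ∈ Cspan (A ∩ B) p, koszulD z = koszulD a := by
    cases p with
    | zero =>
      exact ⟨0, zero_mem _, by rw [map_zero, koszulD_eq_zero_of_mem_zero haA]⟩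
    | succ q =>
      have h1 := mem_Cspan_iff.mp (koszulD_mem hA haA)
      have hdaB : koszulD a ∈ Cspan B q := by
        have : koszulD a = -koszulD (x - a) := by
          rw [eq_neg_iff_add_eq_zero]; exact hdsum
        rw [this]
        exact neg_mem (koszulD_mem hB hbB)
      have h2 := mem_Cspan_iff.mp hdaB
      have hda : koszulD a ∈ Cspan (A ∩ B) q := by
        rw [mem_Cspan_iff]
        exact fun J hJ => ⟨(h1 J hJ).1, (h1 J hJ).2, (h2 J hJ).2⟩
      have hdd : koszulD (koszulD a) = 0 := koszulD_sq a
      exact heI q _ hda hdd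
  have hzA : z ∈ Cspan A p := Cspan_mono Set.inter_subset_left p hz
  have hzB : z ∈ Cspan B p := Cspan_mono Set.inter_subset_right p hz
  obtain ⟨y₁, hy₁, hdy₁⟩ := heA p (a - z) (sub_mem haA hzA)
    (by rw [map_sub, hdz, sub_self])
  obtain ⟨y₂, hy₂, hdy₂⟩ := heB p ((x - a) + z) (add_mem hbB hzB)
    (by rw [map_add, hdz]; rw [add_comm] at hdsum; exact hdsum)
  refine ⟨y₁ + y₂, ?_, ?_⟩
  · exact add_mem (Cspan_mono Set.subset_union_left _ hy₁)
      (Cspan_mono Set.subset_union_right _ hy₂)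
  · rw [map_add, hdy₁, hdy₂]
    abel

end Aux

/-- Step 1, the rank-one case, of the proof of Proposition 7 of the
paper.  Let `F` be a contravariant functor from subsets of the finite set `I` to closed
convex subsets of `ℝ`, and assume the evaluation subcomplexes `C^F_•(m)` are exact for
every `m ∈ ℝ`.  Then the functor `F⁺(I') := F(I') + [0,∞)` (Minkowski sum) also has exact
evaluation subcomplexes `C^{F⁺}_•(m)` for every `m ∈ ℝ`. -/
theorem evalExact_add_halfline (F : Finset I → Set ℝ)
    (hContra : ∀ A B : Finset I, A ⊆ B → F B ⊆ F A)
    (hClosed : ∀ J : Finset I, IsClosed (F J))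
    (hConvex : ∀ J : Finset I, Convex ℝ (F J))
    (hExact : ∀ m : ℝ, evalExact F m) :
    ∀ m : ℝ, evalExact (fun J => F J + Set.Ici (0 : ℝ)) m := by
  classical
  intro m
  have hOC : ∀ J : Finset I, ∀ {a b c : ℝ}, a ∈ F J → b ∈ F J → a ≤ c → c ≤ b → c ∈ F J :=
    fun J {a b c} ha hb hac hcb => (hConvex J).ordConnected.out ha hb ⟨hac, hcb⟩
  set SP : Set (Finset I) := {K | ∃ a ∈ F K, a ≤ m} with hSPdef
  -- membership translation
  have hSPiff : ∀ K : Finset I, m ∈ F K + Set.Ici (0 : ℝ) ↔ K ∈ SP := by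
    intro K
    rw [Set.mem_add]
    constructor
    · rintro ⟨a, ha, t, ht, hsum⟩
      have ht' : (0 : ℝ) ≤ t := ht
      exact ⟨a, ha, by linarith⟩
    · rintro ⟨a, ha, ham⟩
      exact ⟨a, ha, m - a, by simpa using ham, by ring⟩
  have hCeq : ∀ p, evalC (fun J => F J + Set.Ici (0 : ℝ)) m p = Cspan SP p := by
    intro p
    unfold evalC Cspan
    congr 1
    ext v
    constructor
    · rintro ⟨J, h1, h2, h3⟩; exact ⟨J, h1, (hSPiff J).mp h2, h3⟩
    · rintro ⟨J, h1, h2, h3⟩; exact ⟨J, h1, (hSPiff J).mpr h2, h3⟩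
  -- it suffices to prove exactness for SP
  suffices key : CExact SP by
    intro p x hx hdx
    rw [hCeq] at hx
    obtain ⟨y, hy, hdy⟩ := key p x hx hdx
    exact ⟨y, by rw [hCeq]; exact hy, hdy⟩
  by_cases hne : SP.Nonempty
  swap
  · rw [Set.not_nonempty_iff_eq_empty] at hne
    rw [hne]
    exact cexact_empty
  -- the "top point" of F K below m
  set t : Finset I → ℝ := fun K => sSup (F K ∩ Set.Iic m) with htdef
  have hbdd : ∀ K : Finset I, BddAbove (F K ∩ Set.Iic m) := fun K => ⟨m, fun y hy => hy.2⟩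
  have htmem : ∀ K ∈ SP, t K ∈ F K ∧ t K ≤ m := by
    intro K hK
    obtain ⟨a, ha, ham⟩ := hK
    have := IsClosed.csSup_mem ((hClosed K).inter isClosed_Iic)
      ⟨a, ha, ham⟩ (hbdd K)
    exact ⟨this.1, this.2⟩
  have htmax : ∀ K : Finset I, ∀ y ∈ F K, y ≤ m → y ≤ t K :=
    fun K y hy hym => le_csSup (hbdd K) ⟨hy, hym⟩
  -- the finite set of threshold values
  set V : Set ℝ :=
    {v | ∃ K ∈ SP, v = t K ∨ BddBelow (F K) ∧ v = sInf (F K)} with hVdef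
  have hVfin : V.Finite := by
    apply Set.Finite.subset ((Set.finite_range t).union
      (Set.finite_range fun K : Finset I => sInf (F K)))
    rintro v ⟨K, _, h | ⟨_, h⟩⟩
    · exact Or.inl ⟨K, h.symm⟩
    · exact Or.inr ⟨K, h.symm⟩
  have hVle : ∀ v ∈ V, v ≤ m := by
    rintro v ⟨K, hK, h | ⟨hbb, h⟩⟩
    · exact h ▸ (htmem K hK).2
    · subst h
      exact le_trans (csInf_le hbb (htmem K hK).1) (htmem K hK).2
  have hVF : ∀ v ∈ V, ∀ K : Finset I, v ∈ F K → K ∈ SP :=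
    fun v hv K hvK => ⟨v, hvK, hVle v hv⟩
  -- the gap lemma
  have hgap : ∀ w' ∈ V, ∀ w ∈ V, w' < w → (∀ v ∈ V, ¬(w' < v ∧ v < w)) →
      ∀ K : Finset I, ((w' + w) / 2 ∈ F K ↔ w' ∈ F K ∧ w ∈ F K) := by
    intro w' hw' w hw hlt hnogap K
    have hwm : w ≤ m := hVle w hw
    constructor
    · intro hy
      have hKSP : K ∈ SP := ⟨_, hy, by linarith⟩
      obtain ⟨htF, htm⟩ := htmem K hKSP
      have hty : (w' + w) / 2 ≤ t K := htmax K _ hy (by linarith)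
      have hwFK : w ∈ F K := by
        rcases le_or_gt w (t K) with h | h
        · exact hOC K hy htF (by linarith) h
        · exact absurd ⟨by linarith, h⟩ (hnogap (t K) ⟨K, hKSP, Or.inl rfl⟩)
      have hw'FK : w' ∈ F K := by
        by_cases hbb : ∃ z ∈ F K, z ≤ w'
        · obtain ⟨z, hz, hzw⟩ := hbb
          exact hOC K hz hy hzw (by linarith)
        · push_neg at hbb
          have hBdd : BddBelow (F K) := ⟨w', fun z hz => (hbb z hz).le⟩
          have hsmem : sInf (F K) ∈ F K :=
            IsClosed.csInf_mem (hClosed K) ⟨_, hy⟩ hBdd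
          have h1 : w' < sInf (F K) := hbb _ hsmem
          have h2 : sInf (F K) ≤ (w' + w) / 2 := csInf_le hBdd hy
          exact absurd ⟨h1, by linarith⟩
            (hnogap (sInf (F K)) ⟨K, hKSP, Or.inr ⟨hBdd, rfl⟩⟩)
      exact ⟨hw'FK, hwFK⟩
    · rintro ⟨h1, h2⟩
      exact hOC K h1 h2 (by linarith) (by linarith)
  -- evaluation complexes of F are down-closed and exact
  have hSF_dc : ∀ v : ℝ, DClosed {K : Finset I | v ∈ F K} :=
    fun v J K hJK hv => hContra J K hJK hv
  have hSF_ex : ∀ v : ℝ, CExact {K : Finset I | v ∈ F K} := by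
    intro v p x hx hdx
    exact hExact v p x hx hdx
  -- the partial unions
  set U : ℝ → Set (Finset I) := fun w => {K | ∃ v ∈ V, v ≤ w ∧ v ∈ F K} with hUdef
  have hUdc : ∀ w : ℝ, DClosed (U w) := by
    rintro w J K hJK ⟨v, hv, hvw, hvK⟩
    exact ⟨v, hv, hvw, hContra J K hJK hvK⟩
  have hbase : ∀ w ∈ V, V ∩ Set.Iio w = ∅ → CExact (U w) := by
    intro w hw hempty
    have hUeq : U w = {K : Finset I | w ∈ F K} := by
      ext K
      constructor
      · rintro ⟨v, hv, hvw, hvK⟩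
        rcases eq_or_lt_of_le hvw with rfl | h
        · exact hvK
        · exfalso
          have hvin : v ∈ V ∩ Set.Iio w := ⟨hv, h⟩
          rw [hempty] at hvin
          exact hvin
      · intro h
        exact ⟨w, hw, le_refl w, h⟩
    rw [hUeq]
    exact hSF_ex w
  have hUex : ∀ n : ℕ, ∀ w ∈ V, (V ∩ Set.Iio w).ncard ≤ n → CExact (U w) := by
    intro n
    induction n with
    | zero =>
      intro w hw hcard
      apply hbase w hw
      rw [← Set.ncard_eq_zero (hVfin.inter_of_left _)]
      omega
    | succ n ih =>
      intro w hw hcard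
      by_cases hne' : (V ∩ Set.Iio w).Nonempty
      swap
      · exact hbase w hw (Set.not_nonempty_iff_eq_empty.mp hne')
      · have hWfin : (V ∩ Set.Iio w).Finite := hVfin.inter_of_left _
        set Wf : Finset ℝ := hWfin.toFinset with hWfdef
        have hWfne : Wf.Nonempty := by
          rwa [hWfdef, Set.Finite.toFinset_nonempty]
        set w' : ℝ := Wf.max' hWfne with hw'def
        have hw'mem : w' ∈ V ∩ Set.Iio w := by
          rw [← hWfin.mem_toFinset]
          exact Wf.max'_mem hWfne
        have hw'V : w' ∈ V := hw'mem.1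
        have hw'lt : w' < w := hw'mem.2
        have hw'max : ∀ v ∈ V, v < w → v ≤ w' := by
          intro v hv hvw
          apply Finset.le_max'
          rw [hWfin.mem_toFinset]
          exact ⟨hv, hvw⟩
        have hA : CExact (U w') := by
          apply ih w' hw'V
          have hsub : V ∩ Set.Iio w' ⊂ V ∩ Set.Iio w := by
            constructor
            · rintro v ⟨hv1, hv2⟩
              exact ⟨hv1, lt_trans hv2 hw'lt⟩
            · intro hsub'
              exact absurd (hsub' hw'mem).2 (lt_irrefl w')
          have := Set.ncard_lt_ncard hsub hWfin
          omega
        have hnogap : ∀ v ∈ V, ¬(w' < v ∧ v < w) := by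
          rintro v hv ⟨h1, h2⟩
          exact absurd (hw'max v hv h2) (not_le.mpr h1)
        have hmid := hgap w' hw'V w hw hw'lt hnogap
        have hint : U w' ∩ {K : Finset I | w ∈ F K}
            = {K : Finset I | (w' + w) / 2 ∈ F K} := by
          ext K
          simp only [Set.mem_inter_iff, Set.mem_setOf_eq]
          rw [hmid K]
          constructor
          · rintro ⟨⟨v, hv, hvw', hvK⟩, hwK⟩
            exact ⟨hOC K hvK hwK hvw' hw'lt.le, hwK⟩
          · rintro ⟨h1, h2⟩
            exact ⟨⟨w', hw'V, le_refl _, h1⟩, h2⟩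
        have hunion : U w = U w' ∪ {K : Finset I | w ∈ F K} := by
          ext K
          constructor
          · rintro ⟨v, hv, hvw, hvK⟩
            rcases eq_or_lt_of_le hvw with rfl | h
            · exact Or.inr hvK
            · exact Or.inl ⟨v, hv, hw'max v hv h, hvK⟩
          · rintro (⟨v, hv, hvw, hvK⟩ | h)
            · exact ⟨v, hv, le_trans hvw hw'lt.le, hvK⟩
            · exact ⟨w, hw, le_refl _, h⟩
        rw [hunion]
        apply cexact_union (hUdc w') (hSF_dc w) hA (hSF_ex w)
        rw [hint]
        exact hSF_ex _
  -- conclude: SP = U (max V)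
  obtain ⟨K₀, hK₀⟩ := hne
  have hVne : V.Nonempty := ⟨t K₀, K₀, hK₀, Or.inl rfl⟩
  have hVfne : hVfin.toFinset.Nonempty := by
    rwa [Set.Finite.toFinset_nonempty]
  set wm : ℝ := hVfin.toFinset.max' hVfne with hwmdef
  have hwmV : wm ∈ V := by
    rw [← hVfin.mem_toFinset]
    exact Finset.max'_mem _ _
  have hwmax : ∀ v ∈ V, v ≤ wm := by
    intro v hv
    apply Finset.le_max'
    rwa [hVfin.mem_toFinset]
  have hSPU : SP = U wm := by
    ext K
    constructor
    · intro hK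
      exact ⟨t K, ⟨K, hK, Or.inl rfl⟩, hwmax _ ⟨K, hK, Or.inl rfl⟩, (htmem K hK).1⟩
    · rintro ⟨v, hv, _, hvK⟩
      exact hVF v hv K hvK
  rw [hSPU]
  exact hUex (V ∩ Set.Iio wm).ncard wm hwmV le_rfl


end
end

section
/- Let Δ⁺ ⊆ Δ⁻ ⊆ ℝⁿ with both Δ⁺ and Δ⁻ closed and convex and Δ⁺ ≠ Δ⁻, and let (C_t)_{t∈T} be the family of connected components of Δ⁻ \ Δ⁺ (indexed by the set T of components). Set ∇_t := C_t ∪ Δ⁺ for t ∈ T. Then: (a) each ∇_t is closed and convex; (b) ⋃_{t∈T} ∇_t = Δ⁻; (c) for all s ≠ t in T, ∇_s ∩ ∇_t = Δ⁺; more generally the intersection ⋂_{t∈T'} ∇_t equals Δ⁺ for every subset T' ⊆ T with at least two elements. -/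
section aux
variable {n : ℕ} {Δp Δm : Set (Fin n → ℝ)} {a u v : Fin n → ℝ}

lemma seg_mem_component (hΔm : Convex ℝ Δm) {b : Fin n → ℝ}
    (ha : a ∈ Δm \ Δp) (hb : b ∈ Δm) {t : ℝ} (ht : t ∈ Set.Icc (0:ℝ) 1)
    (h : ∀ s ∈ Set.Icc (0:ℝ) t, (1 - s) • a + s • b ∉ Δp) :
    (1 - t) • a + t • b ∈ connectedComponentIn (Δm \ Δp) a := by
  set f : ℝ → (Fin n → ℝ) := fun s => (1 - s) • a + s • b with hf
  have hcont : Continuous f := by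
    apply Continuous.add <;> exact (by continuity)
  have hconn : IsPreconnected (f '' Set.Icc 0 t) :=
    isPreconnected_Icc.image f hcont.continuousOn
  have hsub : f '' Set.Icc 0 t ⊆ Δm \ Δp := by
    rintro z ⟨s, hs, rfl⟩
    refine ⟨hΔm ha.1 hb ?_ ?_ (by ring), h s hs⟩
    · linarith [hs.2, ht.2]
    · exact hs.1
  have hmem : a ∈ f '' Set.Icc 0 t := ⟨0, ⟨le_refl _, ht.1⟩, by simp [hf]⟩
  exact (hconn.subset_connectedComponentIn hmem hsub) ⟨t, ⟨ht.1, le_refl _⟩, rfl⟩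

lemma conv_aux (hΔp : Convex ℝ Δp) (hΔm : Convex ℝ Δm) (hsub : Δp ⊆ Δm)
    (hu : u ∈ connectedComponentIn (Δm \ Δp) a)
    (hv : v ∈ connectedComponentIn (Δm \ Δp) a ∪ Δp)
    {t : ℝ} (ht : t ∈ Set.Icc (0:ℝ) 1) :
    (1 - t) • u + t • v ∈ connectedComponentIn (Δm \ Δp) a ∪ Δp := by
  have huF : u ∈ Δm \ Δp := connectedComponentIn_subset _ _ hu
  have hvm : v ∈ Δm := by
    rcases hv with hv | hv
    · exact (connectedComponentIn_subset _ _ hv).1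
    · exact hsub hv
  by_cases hz : (1 - t) • u + t • v ∈ Δp
  · exact Or.inr hz
  by_cases hfw : ∀ s ∈ Set.Icc (0:ℝ) t, (1 - s) • u + s • v ∉ Δp
  · left
    rw [connectedComponentIn_eq hu]
    exact seg_mem_component hΔm huF hvm ht hfw
  push_neg at hfw
  obtain ⟨s₀, hs₀, hs₀p⟩ := hfw
  -- the parameter set {s | γ s ∈ Δp} is convex
  have hconvS : Convex ℝ ((AffineMap.lineMap u v : ℝ →ᵃ[ℝ] (Fin n → ℝ)) ⁻¹' Δp) :=
    hΔp.affine_preimage _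
  have hline : ∀ s : ℝ, (AffineMap.lineMap u v : ℝ →ᵃ[ℝ] (Fin n → ℝ)) s
      = (1 - s) • u + s • v := fun s => AffineMap.lineMap_apply_module u v s
  have hcontr : ∀ s₁ : ℝ, t ≤ s₁ → (1 - s₁) • u + s₁ • v ∈ Δp → False := by
    intro s₁ hts₁ hs₁p
    have h0 : s₀ ∈ (AffineMap.lineMap u v : ℝ →ᵃ[ℝ] (Fin n → ℝ)) ⁻¹' Δp := by
      simpa [hline] using hs₀p
    have h1 : s₁ ∈ (AffineMap.lineMap u v : ℝ →ᵃ[ℝ] (Fin n → ℝ)) ⁻¹' Δp := by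
      simpa [hline] using hs₁p
    have := hconvS.ordConnected.out h0 h1 ⟨hs₀.2, hts₁⟩
    rw [Set.mem_preimage, hline] at this
    exact hz this
  rcases hv with hv | hv
  · -- v in the component: walk backwards from v
    by_cases hbw : ∀ s ∈ Set.Icc (0:ℝ) (1 - t), (1 - s) • v + s • u ∉ Δp
    · left
      rw [connectedComponentIn_eq hv]
      have hvF : v ∈ Δm \ Δp := connectedComponentIn_subset _ _ hv
      have ht' : (1 - t) ∈ Set.Icc (0:ℝ) 1 := ⟨by linarith [ht.2], by linarith [ht.1]⟩
      have := seg_mem_component hΔm hvF huF.1 ht' hbw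
      have heq : (1 - (1 - t)) • v + (1 - t) • u = (1 - t) • u + t • v := by
        module
      rwa [heq] at this
    · push_neg at hbw
      obtain ⟨s', hs', hs'p⟩ := hbw
      have heq : (1 - s') • v + s' • u = (1 - (1 - s')) • u + (1 - s') • v := by
        module
      rw [heq] at hs'p
      exact absurd hs'p (by
        intro h
        exact hcontr (1 - s') (by linarith [hs'.2]) h)
  · -- v ∈ Δp : then s₁ = 1 works
    exact absurd hv (by
      intro h
      exact hcontr 1 ht.2 (by simpa using h))

end aux


/-- structural properties of the covering `∇_t = C_t ∪ Δ⁺` of `Δ⁻`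
underlying Corollary 14 and Section 4 of the paper.
Let `Δ⁺ ⊆ Δ⁻ ⊆ ℝⁿ` with both `Δ⁺` and `Δ⁻` closed and convex and `Δ⁺ ≠ Δ⁻`, and for a
point `x ∈ Δ⁻ \ Δ⁺` let `C_x := connectedComponentIn (Δ⁻ \ Δ⁺) x` be its connected
component and `∇_x := C_x ∪ Δ⁺`.  Then:
(a) each `∇_x` is closed and convex;
(b) `⋃_x ∇_x = Δ⁻`;
(c) `∇_x ∩ ∇_y = Δ⁺` whenever `C_x ≠ C_y`; more generally, the intersection
`⋂_{x ∈ P} ∇_x` equals `Δ⁺` for every `P ⊆ Δ⁻ \ Δ⁺` containing points of at least two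
distinct components. -/
theorem components_cover_structure {n : ℕ} (Δp Δm : Set (Fin n → ℝ))
    (hΔpClosed : IsClosed Δp) (hΔp : Convex ℝ Δp)
    (hΔmClosed : IsClosed Δm) (hΔm : Convex ℝ Δm)
    (hsub : Δp ⊆ Δm) (hne : Δp ≠ Δm) :
    (∀ x ∈ Δm \ Δp,
      IsClosed (connectedComponentIn (Δm \ Δp) x ∪ Δp) ∧
      Convex ℝ (connectedComponentIn (Δm \ Δp) x ∪ Δp)) ∧
    (⋃ x ∈ Δm \ Δp, (connectedComponentIn (Δm \ Δp) x ∪ Δp)) = Δm ∧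
    (∀ x ∈ Δm \ Δp, ∀ y ∈ Δm \ Δp,
      connectedComponentIn (Δm \ Δp) x ≠ connectedComponentIn (Δm \ Δp) y →
      (connectedComponentIn (Δm \ Δp) x ∪ Δp) ∩ (connectedComponentIn (Δm \ Δp) y ∪ Δp)
        = Δp) ∧
    (∀ P : Set (Fin n → ℝ), P ⊆ Δm \ Δp →
      (∃ x ∈ P, ∃ y ∈ P,
        connectedComponentIn (Δm \ Δp) x ≠ connectedComponentIn (Δm \ Δp) y) →
      (⋂ x ∈ P, (connectedComponentIn (Δm \ Δp) x ∪ Δp)) = Δp) := by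
  -- disjointness of components from Δp, and component subsets
  have hCsub : ∀ x, connectedComponentIn (Δm \ Δp) x ⊆ Δm \ Δp :=
    fun x => connectedComponentIn_subset _ _
  have hdisj : ∀ x y, x ∈ Δm \ Δp → y ∈ Δm \ Δp →
      connectedComponentIn (Δm \ Δp) x ≠ connectedComponentIn (Δm \ Δp) y →
      (connectedComponentIn (Δm \ Δp) x ∪ Δp) ∩ (connectedComponentIn (Δm \ Δp) y ∪ Δp)
        = Δp := by
    intro x y hx hy hxy
    apply Set.Subset.antisymm
    · rintro z ⟨hz1 | hz1, hz2 | hz2⟩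
      · exact absurd ((connectedComponentIn_eq hz1).trans
          (connectedComponentIn_eq hz2).symm) hxy
      · exact hz2
      · exact hz1
      · exact hz1
    · intro z hz; exact ⟨Or.inr hz, Or.inr hz⟩
  refine ⟨?_, ?_, fun x hx y hy => hdisj x y hx hy, ?_⟩
  · intro x hx
    constructor
    · -- closedness
      rw [← closure_subset_iff_isClosed, closure_union, hΔpClosed.closure_eq]
      rintro z (hz | hz)
      · by_cases hzp : z ∈ Δp
        · exact Or.inr hzp
        · have hzm : z ∈ Δm := by
            have : closure (connectedComponentIn (Δm \ Δp) x) ⊆ closure Δm :=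
              closure_mono ((hCsub x).trans Set.diff_subset)
            rw [hΔmClosed.closure_eq] at this
            exact this hz
          left
          have hD : IsPreconnected
              (closure (connectedComponentIn (Δm \ Δp) x) ∩ (Δm \ Δp)) := by
            apply (isPreconnected_connectedComponentIn).subset_closure
            · exact Set.subset_inter subset_closure (hCsub x)
            · exact Set.inter_subset_left
          have hxD : x ∈ closure (connectedComponentIn (Δm \ Δp) x) ∩ (Δm \ Δp) :=
            ⟨subset_closure (mem_connectedComponentIn hx), hx⟩
          exact hD.subset_connectedComponentIn hxD Set.inter_subset_right ⟨hz, hzm, hzp⟩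
      · exact Or.inr hz
    · -- convexity
      intro u hu v hv s t hs ht hst
      have hts : s = 1 - t := by linarith
      subst hts
      have htI : t ∈ Set.Icc (0:ℝ) 1 := ⟨ht, by linarith⟩
      rcases hu with hu | hu
      · exact conv_aux hΔp hΔm hsub hu hv htI
      · rcases hv with hv | hv
        · have h1t : (1 - t) ∈ Set.Icc (0:ℝ) 1 := ⟨by linarith, by linarith⟩
          have := conv_aux hΔp hΔm hsub hv (Or.inr hu) h1t
          have heq : (1 - (1 - t)) • v + (1 - t) • u = (1 - t) • u + t • v := by
            module
          rwa [heq] at this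
        · exact Or.inr (hΔp hu hv hs ht (by linarith))
  · -- covering
    apply Set.Subset.antisymm
    · intro z hz
      simp only [Set.mem_iUnion] at hz
      obtain ⟨x, hx, hz⟩ := hz
      rcases hz with hz | hz
      · exact (hCsub x hz).1
      · exact hsub hz
    · intro z hz
      by_cases hzp : z ∈ Δp
      · have : ∃ x, x ∈ Δm \ Δp := by
          by_contra h
          push_neg at h
          apply hne
          apply Set.Subset.antisymm hsub
          intro w hw
          by_contra hwp
          exact h w ⟨hw, hwp⟩
        obtain ⟨x, hx⟩ := this
        exact Set.mem_biUnion hx (Or.inr hzp)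
      · exact Set.mem_biUnion (⟨hz, hzp⟩ : z ∈ Δm \ Δp)
          (Or.inl (mem_connectedComponentIn ⟨hz, hzp⟩))
  · -- intersection
    intro P hP ⟨x, hx, y, hy, hxy⟩
    apply Set.Subset.antisymm
    · intro z hz
      simp only [Set.mem_iInter] at hz
      have := hdisj x y (hP hx) (hP hy) hxy
      rw [← this]
      exact ⟨hz x hx, hz y hy⟩
    · intro z hz
      simp only [Set.mem_iInter]
      intro w _
      exact Or.inr hz
end
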